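/- Let C ∈ ℝ^{N×N} be entrywise nonnegative and irreducible, let σ ≥ ρ(C) (the spectral radius of C), and set A := σI − C (an irreducible M-matrix). Then: (i) for every z ∈ ℝ^N with z ≥ 0 and z ≠ 0, the matrix diag(z) + A is invertible and its inverse is entrywise nonnegative; (ii) for all indices i, j, the entry [(diag(z) + A)^{-1}]_{ij} is a convex and nonincreasing function of z on {z ∈ ℝ^N : z ≥ 0, z ≠ 0}: for all such z, z′ and θ ∈ [0,1], [(diag(θz + (1−θ)z′) + A)^{-1}]_{ij} ≤ θ[(diag(z) + A)^{-1}]_{ij} + (1−θ)[(diag(z′) + A)^{-1}]_{ij}, and z ≤ z′ implies [(diag(z′) + A)^{-1}]_{ij} ≤ [(diag(z) + A)^{-1}]_{ij}. -/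

import Mathlib

noncomputable section

open Matrix

/-- Irreducibility of a nonnegative matrix. -/
def MatIrred {N : ℕ} (C : Matrix (Fin N) (Fin N) ℝ) : Prop :=
  ∀ i j, ∃ k : ℕ, 1 ≤ k ∧ 0 < (C ^ k) i j

/-- Spectral radius of a real matrix: the maximum modulus of its complex eigenvalues. -/
def specRad {N : ℕ} (A : Matrix (Fin N) (Fin N) ℝ) : ℝ :=
  sSup ((fun μ : ℂ => ‖μ‖) '' spectrum ℂ (A.map Complex.ofReal))

/-!
A vector `w` with `C w ≤ ρ(C) w` is found as a limit point, on the standard simplex, of the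
normalised resolvent vectors `(t - C)⁻¹ 𝟙` as `t ↓ ρ(C)`; irreducibility makes it positive.
For `z ≥ 0`, `z ≠ 0` split `diag z + σ - C = D (1 - G)` with `D = diag (z + σ + 1)` and
`G = D⁻¹ (C + 1)`; the shift by `1` keeps `D` invertible where `z` vanishes. Then `G w ≤ w`,
strictly where `z > 0`, and irreducibility spreads the strict inequality to every coordinate of
some `G ^ T w`. Hence `∑ Gⁿ D⁻¹` converges to `(diag z + A)⁻¹`, which is therefore nonnegative.

Each entry of `Gⁿ D⁻¹` is built from the log-convex functions `z ↦ (z k + σ + 1)⁻¹` by products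
and nonnegative sums, which preserve log-convexity (sums by Hölder's inequality); so every term,
and with it the series, is convex in `z`. Monotonicity is the resolvent identity
`M⁻¹ - M'⁻¹ = M⁻¹ (M' - M) M'⁻¹` with `M' - M = diag (z' - z) ≥ 0`.
-/

open Filter Topology

lemma rpow_mul_rpow_add_rpow_mul_rpow_le {a b c d θ θ' : ℝ} (ha : 0 ≤ a) (hb : 0 ≤ b)
    (hc : 0 ≤ c) (hd : 0 ≤ d) (hθ : 0 < θ) (hθ' : 0 < θ') (h : θ + θ' = 1) :
    a ^ θ * b ^ θ' + c ^ θ * d ^ θ' ≤ (a + c) ^ θ * (b + d) ^ θ' := by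
  have := Real.inner_le_Lp_mul_Lq_of_nonneg Finset.univ (Real.HolderConjugate.inv_inv hθ hθ' h)
    (f := ![a ^ θ, c ^ θ]) (g := ![b ^ θ', d ^ θ'])
    (by simp [Fin.forall_fin_two, Real.rpow_nonneg, ha, hc])
    (by simp [Fin.forall_fin_two, Real.rpow_nonneg, hb, hd])
  simpa [Fin.sum_univ_two, ← Real.rpow_mul, ha, hb, hc, hd, hθ.ne', hθ'.ne'] using this

lemma summable_pow_div {γ : ℝ} (hγ0 : 0 ≤ γ) (hγ1 : γ < 1) (T : ℕ) [NeZero T] :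
    Summable fun n : ℕ => γ ^ (n / T) := by
  rw [← (Nat.divModEquiv T).symm.summable_iff]
  refine (summable_prod_of_nonneg fun _ => pow_nonneg hγ0 _).mpr
    ⟨fun _ => (hasSum_fintype _).summable, ?_⟩
  have hdiv : ∀ (q : ℕ) (r : Fin T), (q * T + r) / T = q := fun q r => by
    rw [mul_comm, Nat.mul_add_div (NeZero.pos T), Nat.div_eq_of_lt r.isLt, add_zero]
  simpa [Nat.divModEquiv, hdiv] using
    (summable_geometric_of_lt_one hγ0 hγ1).mul_left (T : ℝ)

lemma exists_lt_one_forall_lt {ι : Type*} [Finite ι] {r : ι → ℝ} (hr : ∀ i, r i < 1) :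
    ∃ γ, 0 < γ ∧ γ < 1 ∧ ∀ i, r i < γ := by
  have h : ∀ᶠ γ in 𝓝[<] (1 : ℝ), 0 < γ ∧ ∀ i, r i < γ :=
    nhdsWithin_le_nhds ((eventually_gt_nhds one_pos).and
      (eventually_all.2 fun i => eventually_gt_nhds (hr i)))
  obtain ⟨γ, ⟨hγ0, hγ⟩, hγ1⟩ := (h.and self_mem_nhdsWithin).exists
  exact ⟨γ, hγ0, hγ1, hγ⟩

lemma convexOn_tsum {E κ : Type*} [AddCommMonoid E] [Module ℝ E] {s : Set E}
    (hs : Convex ℝ s) {f : κ → E → ℝ} (hf : ∀ n, ConvexOn ℝ s (f n))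
    (hsum : ∀ x ∈ s, Summable fun n => f n x) : ConvexOn ℝ s fun x => ∑' n, f n x := by
  refine ⟨hs, fun x hx y hy a b ha hb hab => ?_⟩
  calc ∑' n, f n (a • x + b • y) ≤ ∑' n, (a * f n x + b * f n y) :=
        Summable.tsum_le_tsum (fun n => (hf n).2 hx hy ha hb hab) (hsum _ (hs hx hy ha hb hab))
          (((hsum x hx).mul_left a).add ((hsum y hy).mul_left b))
    _ = a • ∑' n, f n x + b • ∑' n, f n y := by
        rw [((hsum x hx).mul_left a).tsum_add ((hsum y hy).mul_left b), tsum_mul_left,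
          tsum_mul_left, smul_eq_mul, smul_eq_mul]

section LogConvex

variable {E : Type*} [AddCommMonoid E] [Module ℝ E]

/-- Log-convexity in multiplicative form, so that `f` may vanish. -/
structure LogConvexOn (s : Set E) (f : E → ℝ) : Prop where
  convex : Convex ℝ s
  nonneg : ∀ x ∈ s, 0 ≤ f x
  le_rpow_mul_rpow : ∀ ⦃x⦄, x ∈ s → ∀ ⦃y⦄, y ∈ s → ∀ ⦃a b : ℝ⦄, 0 < a → 0 < b → a + b = 1 →
    f (a • x + b • y) ≤ f x ^ a * f y ^ b

variable {s : Set E} {f g : E → ℝ}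

lemma LogConvexOn.convexOn (hf : LogConvexOn s f) : ConvexOn ℝ s f :=
  convexOn_iff_forall_pos.mpr ⟨hf.convex, fun _ hx _ hy _ _ ha hb hab =>
    (hf.le_rpow_mul_rpow hx hy ha hb hab).trans
      (Real.geom_mean_le_arith_mean2_weighted ha.le hb.le (hf.nonneg _ hx) (hf.nonneg _ hy) hab)⟩

lemma logConvexOn_const (hs : Convex ℝ s) {c : ℝ} (hc : 0 ≤ c) : LogConvexOn s fun _ => c := by
  refine ⟨hs, fun _ _ => hc, fun _ _ _ _ a b ha _ hab => ?_⟩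
  rcases hc.eq_or_lt with rfl | hc
  · simp [Real.zero_rpow ha.ne']
  · rw [← Real.rpow_add hc, hab, Real.rpow_one]

lemma LogConvexOn.mul (hf : LogConvexOn s f) (hg : LogConvexOn s g) :
    LogConvexOn s (f * g) := by
  refine ⟨hf.convex, fun x hx => mul_nonneg (hf.nonneg x hx) (hg.nonneg x hx),
    fun x hx y hy a b ha hb hab => ?_⟩
  have hf0 := hf.nonneg
  have hg0 := hg.nonneg
  calc f (a • x + b • y) * g (a • x + b • y)
      ≤ (f x ^ a * f y ^ b) * (g x ^ a * g y ^ b) :=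
        mul_le_mul (hf.le_rpow_mul_rpow hx hy ha hb hab) (hg.le_rpow_mul_rpow hx hy ha hb hab)
          (hg0 _ (hf.convex hx hy ha.le hb.le hab))
          (mul_nonneg (Real.rpow_nonneg (hf0 x hx) a) (Real.rpow_nonneg (hf0 y hy) b))
    _ = (f x * g x) ^ a * (f y * g y) ^ b := by
        rw [Real.mul_rpow (hf0 x hx) (hg0 x hx), Real.mul_rpow (hf0 y hy) (hg0 y hy)]
        ring

lemma LogConvexOn.add (hf : LogConvexOn s f) (hg : LogConvexOn s g) :
    LogConvexOn s (f + g) :=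
  ⟨hf.convex, fun x hx => add_nonneg (hf.nonneg x hx) (hg.nonneg x hx),
    fun x hx y hy _ _ ha hb hab =>
    (add_le_add (hf.le_rpow_mul_rpow hx hy ha hb hab) (hg.le_rpow_mul_rpow hx hy ha hb hab)).trans
      (rpow_mul_rpow_add_rpow_mul_rpow_le (hf.nonneg x hx) (hf.nonneg y hy) (hg.nonneg x hx)
        (hg.nonneg y hy) ha hb hab)⟩

lemma LogConvexOn.sum (hs : Convex ℝ s) {ι : Type*} {t : Finset ι} {f : ι → E → ℝ}
    (hf : ∀ i ∈ t, LogConvexOn s (f i)) : LogConvexOn s fun x => ∑ i ∈ t, f i x := by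
  classical
  induction t using Finset.induction_on with
  | empty => simpa using logConvexOn_const hs le_rfl
  | insert i t hi ih =>
    simp only [Finset.sum_insert hi]
    exact (hf i (t.mem_insert_self i)).add (ih fun j hj => hf j (Finset.mem_insert_of_mem hj))

end LogConvex

lemma logConvexOn_inv_apply_add {ι : Type*} (k : ι) {c : ℝ} (hc : 0 < c) :
    LogConvexOn (Set.Ici (0 : ι → ℝ)) fun z => (z k + c)⁻¹ := by
  have hpos : ∀ z ∈ Set.Ici (0 : ι → ℝ), 0 < z k + c := fun z hz => by
    have : 0 ≤ z k := hz k
    linarith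
  refine ⟨convex_Ici 0, fun z hz => (inv_pos.2 (hpos z hz)).le,
    fun x hx y hy a b ha hb hab => ?_⟩
  have hxy : (a • x + b • y) k + c = a * (x k + c) + b * (y k + c) := by
    simp only [Pi.add_apply, Pi.smul_apply, smul_eq_mul]
    linear_combination c * hab.symm
  rw [hxy, Real.inv_rpow (hpos x hx).le, Real.inv_rpow (hpos y hy).le, ← mul_inv]
  exact inv_anti₀ (by have := hpos x hx; have := hpos y hy; positivity)
    (Real.geom_mean_le_arith_mean2_weighted ha.le hb.le (hpos x hx).le (hpos y hy).le hab)

namespace Matrix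

variable {ι : Type*} [Fintype ι]

lemma mulVec_mono_of_nonneg {P : Matrix ι ι ℝ} (hP : ∀ i j, 0 ≤ P i j) {v w : ι → ℝ}
    (hvw : v ≤ w) : P *ᵥ v ≤ P *ᵥ w := fun i =>
  dotProduct_le_dotProduct_of_nonneg_left hvw (hP i)

lemma single_le_mulVec {P : Matrix ι ι ℝ} (hP : ∀ i j, 0 ≤ P i j) {w : ι → ℝ} (hw : 0 ≤ w)
    (i j : ι) : P i j * w j ≤ (P *ᵥ w) i :=
  Finset.single_le_sum (f := fun k => P i k * w k) (fun k _ => mul_nonneg (hP i k) (hw k))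
    (Finset.mem_univ j)

lemma exists_mem_stdSimplex_mulVec_le_smul [Nonempty ι] {C : Matrix ι ι ℝ} {v : ι → ℝ}
    (hv : ∀ i, 0 < v i) {t : ℝ} (hCv : C *ᵥ v ≤ t • v) :
    ∃ u ∈ stdSimplex ℝ ι, C *ᵥ u ≤ t • u := by
  have hsum : 0 < ∑ i, v i := Finset.sum_pos (fun i _ => hv i) Finset.univ_nonempty
  refine ⟨(∑ i, v i)⁻¹ • v, ⟨fun i => mul_nonneg (inv_nonneg.2 hsum.le) (hv i).le, ?_⟩, ?_⟩
  · simp [← Finset.mul_sum, hsum.ne']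
  · rw [mulVec_smul, smul_comm]
    exact smul_le_smul_of_nonneg_left hCv (inv_nonneg.2 hsum.le)

variable [DecidableEq ι]

lemma pow_mulVec_le_pow_smul {P : Matrix ι ι ℝ} (hP : ∀ i j, 0 ≤ P i j) {w : ι → ℝ} {c : ℝ}
    (hc : 0 ≤ c) (hPw : P *ᵥ w ≤ c • w) (n : ℕ) : P ^ n *ᵥ w ≤ c ^ n • w := by
  induction n with
  | zero => simp
  | succ n ih =>
    calc P ^ (n + 1) *ᵥ w = P ^ n *ᵥ (P *ᵥ w) := by rw [pow_succ, mulVec_mulVec]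
      _ ≤ P ^ n *ᵥ (c • w) := mulVec_mono_of_nonneg (pow_apply_nonneg hP n) hPw
      _ = c • (P ^ n *ᵥ w) := mulVec_smul _ _ _
      _ ≤ c • (c ^ n • w) := smul_le_smul_of_nonneg_left ih hc
      _ = c ^ (n + 1) • w := by rw [smul_smul, pow_succ']

lemma antitone_pow_mulVec {P : Matrix ι ι ℝ} (hP : ∀ i j, 0 ≤ P i j) {w : ι → ℝ}
    (hPw : P *ᵥ w ≤ w) : Antitone fun n => P ^ n *ᵥ w :=
  antitone_nat_of_succ_le fun n => by
    rw [pow_succ, ← mulVec_mulVec]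
    exact mulVec_mono_of_nonneg (pow_apply_nonneg hP n) hPw

lemma pow_apply_pos_of_pos_imp_pos {P Q : Matrix ι ι ℝ} (hP : ∀ i j, 0 ≤ P i j)
    (hQ : ∀ i j, 0 ≤ Q i j) (hPQ : ∀ i j, 0 < P i j → 0 < Q i j) (n : ℕ) {i j : ι}
    (h : 0 < (P ^ n) i j) : 0 < (Q ^ n) i j := by
  induction n generalizing j with
  | zero => simpa using h
  | succ n ih =>
    rw [pow_succ, mul_apply, Finset.sum_pos_iff_of_nonneg
      fun k _ => mul_nonneg (pow_apply_nonneg hP n i k) (hP k j)] at h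
    obtain ⟨k, -, hk⟩ := h
    obtain ⟨hik, hkj⟩ :=
      (pos_and_pos_or_neg_and_neg_of_mul_pos hk).resolve_right fun h => h.2.not_ge (hP k j)
    rw [pow_succ, mul_apply]
    exact lt_of_lt_of_le (mul_pos (ih hik) (hPQ k j hkj)) (Finset.single_le_sum
      (f := fun l => (Q ^ n) i l * Q l j) (fun l _ => mul_nonneg (pow_apply_nonneg hQ n i l)
      (hQ l j)) (Finset.mem_univ k))

lemma IsIrreducible.of_pos_imp_pos {P Q : Matrix ι ι ℝ} (hP : P.IsIrreducible)
    (hQ : ∀ i j, 0 ≤ Q i j) (hPQ : ∀ i j, 0 < P i j → 0 < Q i j) : Q.IsIrreducible := by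
  rw [isIrreducible_iff_exists_pow_pos hQ]
  intro i j
  obtain ⟨n, hn, hpos⟩ := (isIrreducible_iff_exists_pow_pos hP.nonneg).mp hP i j
  exact ⟨n, hn, pow_apply_pos_of_pos_imp_pos hP.nonneg hQ hPQ n hpos⟩

lemma IsIrreducible.pos_of_mulVec_le_smul {P : Matrix ι ι ℝ} (hP : P.IsIrreducible) {w : ι → ℝ}
    (hw : 0 < w) {c : ℝ} (hc : 0 ≤ c) (hPw : P *ᵥ w ≤ c • w) (i : ι) : 0 < w i := by
  obtain ⟨hw0, j, hj⟩ := Pi.lt_def.mp hw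
  obtain ⟨n, -, hn⟩ := (isIrreducible_iff_exists_pow_pos hP.nonneg).mp hP i j
  have := (single_le_mulVec (pow_apply_nonneg hP.nonneg n) hw0 i j).trans
    (pow_mulVec_le_pow_smul hP.nonneg hc hPw n i)
  exact pos_of_mul_pos_right ((mul_pos hn hj).trans_le this) (pow_nonneg hc n)

lemma IsIrreducible.exists_pow_mulVec_lt {P : Matrix ι ι ℝ} (hP : P.IsIrreducible) {w : ι → ℝ}
    (hPw : P *ᵥ w ≤ w) {k : ι} (hk : (P *ᵥ w) k < w k) :
    ∃ T, 0 < T ∧ ∀ i, (P ^ T *ᵥ w) i < w i := by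
  have hstep : ∀ i, ∃ n, (P ^ (n + 1) *ᵥ w) i < w i := by
    intro i
    obtain ⟨n, -, hn⟩ := (isIrreducible_iff_exists_pow_pos hP.nonneg).mp hP i k
    refine ⟨n, ?_⟩
    have hgap := single_le_mulVec (pow_apply_nonneg hP.nonneg n) (sub_nonneg.2 hPw) i k
    rw [mulVec_sub, Pi.sub_apply, Pi.sub_apply] at hgap
    have := mul_pos hn (sub_pos.2 hk)
    calc (P ^ (n + 1) *ᵥ w) i = (P ^ n *ᵥ (P *ᵥ w)) i := by rw [pow_succ, mulVec_mulVec]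
      _ < (P ^ n *ᵥ w) i := by linarith
      _ ≤ w i := by simpa using antitone_pow_mulVec hP.nonneg hPw (Nat.zero_le n) i
  choose n hn using hstep
  exact ⟨Finset.univ.sup n + 1, Nat.succ_pos _, fun i => (antitone_pow_mulVec hP.nonneg hPw
    (Nat.succ_le_succ (Finset.le_sup (Finset.mem_univ i))) i).trans_lt (hn i)⟩

lemma summable_pow_of_pow_mulVec_lt {P : Matrix ι ι ℝ} (hP : ∀ i j, 0 ≤ P i j) {w : ι → ℝ}
    (hw : ∀ i, 0 < w i) (hPw : P *ᵥ w ≤ w) {T : ℕ} (hT0 : 0 < T)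
    (hT : ∀ i, (P ^ T *ᵥ w) i < w i) : Summable fun n => P ^ n := by
  have : NeZero T := ⟨hT0.ne'⟩
  obtain ⟨γ, hγ0, hγ1, hγ⟩ := exists_lt_one_forall_lt fun i => (div_lt_one (hw i)).2 (hT i)
  have hPT : P ^ T *ᵥ w ≤ γ • w := fun i => ((div_lt_iff₀ (hw i)).1 (hγ i)).le
  have hbound : ∀ n, P ^ n *ᵥ w ≤ γ ^ (n / T) • w := fun n =>
    calc P ^ n *ᵥ w ≤ P ^ (T * (n / T)) *ᵥ w := antitone_pow_mulVec hP hPw (Nat.mul_div_le n T)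
      _ = (P ^ T) ^ (n / T) *ᵥ w := by rw [pow_mul]
      _ ≤ γ ^ (n / T) • w := pow_mulVec_le_pow_smul (pow_apply_nonneg hP T) hγ0.le hPT _
  refine Pi.summable.mpr fun i => Pi.summable.mpr fun j => ?_
  refine Summable.of_nonneg_of_le (fun n => pow_apply_nonneg hP n i j) (fun n => ?_)
    ((summable_pow_div hγ0.le hγ1 T).mul_right (w i / w j))
  rw [← mul_div_assoc, le_div_iff₀ (hw j)]
  exact (single_le_mulVec (pow_apply_nonneg hP n) (fun k => (hw k).le) i j).trans (hbound n i)

def neumannTerm (P : Matrix ι ι ℝ) (c : ℝ) (z : ι → ℝ) (n : ℕ) : Matrix ι ι ℝ :=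
  (diagonal (fun k => (z k + c)⁻¹) * P) ^ n * diagonal fun k => (z k + c)⁻¹

lemma IsIrreducible.summable_pow_diagonal_inv_mul {P : Matrix ι ι ℝ} (hP : P.IsIrreducible)
    {w : ι → ℝ} (hw : ∀ i, 0 < w i) {c : ℝ} (hc : 0 < c) (hPw : P *ᵥ w ≤ c • w) {z : ι → ℝ}
    (hz : 0 < z) : Summable fun n => (diagonal (fun k => (z k + c)⁻¹) * P) ^ n := by
  obtain ⟨hz0, k, hk⟩ := Pi.lt_def.mp hz
  have hd : ∀ i, 0 < z i + c := fun i => add_pos_of_nonneg_of_pos (hz0 i) hc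
  set G := diagonal (fun k => (z k + c)⁻¹) * P
  have hG : ∀ i j, G i j = (z i + c)⁻¹ * P i j := fun i j => diagonal_mul _ _ _ _
  have hG0 : ∀ i j, 0 ≤ G i j := fun i j => by
    rw [hG]; exact mul_nonneg (inv_pos.2 (hd i)).le (hP.nonneg i j)
  have hGirr : G.IsIrreducible := hP.of_pos_imp_pos hG0 fun i j h => by
    rw [hG]; exact mul_pos (inv_pos.2 (hd i)) h
  have hGw : ∀ i, (z i + c) * (G *ᵥ w) i = (P *ᵥ w) i := fun i => by
    rw [← mulVec_mulVec, mulVec_diagonal, ← mul_assoc, mul_inv_cancel₀ (hd i).ne', one_mul]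
  have hPw' : ∀ i, (P *ᵥ w) i ≤ c * w i := hPw
  have hGw_le : G *ᵥ w ≤ w := fun i => le_of_mul_le_mul_left
    (by nlinarith [hGw i, hPw' i, mul_nonneg (hz0 i) (hw i).le]) (hd i)
  have hGw_lt : (G *ᵥ w) k < w k := lt_of_mul_lt_mul_left
    (by nlinarith [hGw k, hPw' k, mul_pos hk (hw k)]) (hd k).le
  obtain ⟨T, hT0, hT⟩ := hGirr.exists_pow_mulVec_lt hGw_le hGw_lt
  exact summable_pow_of_pow_mulVec_lt hG0 hw hGw_le hT0 hT

lemma IsIrreducible.hasSum_neumannTerm {P : Matrix ι ι ℝ} (hP : P.IsIrreducible) {w : ι → ℝ}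
    (hw : ∀ i, 0 < w i) {c : ℝ} (hc : 0 < c) (hPw : P *ᵥ w ≤ c • w) {z : ι → ℝ} (hz : 0 < z) :
    IsUnit (diagonal z + c • 1 - P) ∧
      HasSum (neumannTerm P c z) (diagonal z + c • 1 - P)⁻¹ := by
  set E : Matrix ι ι ℝ := diagonal fun i => (z i + c)⁻¹
  have hS := hP.summable_pow_diagonal_inv_mul hw hc hPw hz
  have hDE : diagonal (fun i => z i + c) * E = 1 := by
    rw [diagonal_mul_diagonal, ← diagonal_one]
    exact congrArg diagonal (funext fun i => mul_inv_cancel₀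
      (add_pos_of_nonneg_of_pos ((Pi.lt_def.mp hz).1 i) hc).ne')
  have hfactor : diagonal z + c • 1 - P = diagonal (fun i => z i + c) * (1 - E * P) := by
    rw [mul_sub, mul_one, ← mul_assoc, hDE, one_mul, ← diagonal_add, smul_one_eq_diagonal]
  have hinv : (diagonal z + c • 1 - P) * ((∑' n, (E * P) ^ n) * E) = 1 := by
    rw [hfactor, mul_assoc, ← mul_assoc (1 - E * P), hS.one_sub_mul_tsum_pow, one_mul, hDE]
  refine ⟨(isUnit_iff_isUnit_det _).mpr (isUnit_det_of_right_inverse hinv), ?_⟩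
  rw [inv_eq_right_inv hinv]
  exact hS.hasSum.mul_right E

lemma logConvexOn_neumannTerm_apply {P : Matrix ι ι ℝ} (hP : ∀ i j, 0 ≤ P i j) {c : ℝ}
    (hc : 0 < c) (n : ℕ) (i j : ι) :
    LogConvexOn (Set.Ici 0) fun z => neumannTerm P c z n i j := by
  induction n generalizing i j with
  | zero =>
    simp only [neumannTerm, pow_zero, one_mul, diagonal_apply]
    split_ifs with h
    · exact logConvexOn_inv_apply_add i hc
    · exact logConvexOn_const (convex_Ici 0) le_rfl
  | succ n ih =>
    have hsucc : ∀ z, neumannTerm P c z (n + 1) i j =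
        (z i + c)⁻¹ * ∑ k, P i k * neumannTerm P c z n k j := fun z => by
      rw [neumannTerm, pow_succ', mul_assoc, mul_assoc, diagonal_mul, mul_apply]
      rfl
    simp only [hsucc]
    exact (logConvexOn_inv_apply_add i hc).mul (LogConvexOn.sum (convex_Ici 0) fun k _ =>
      (logConvexOn_const (convex_Ici 0) (hP i k)).mul (ih k j))

lemma inv_diagonal_add_apply_le_of_le {A : Matrix ι ι ℝ} {z z' : ι → ℝ}
    (hu : IsUnit (diagonal z + A)) (hu' : IsUnit (diagonal z' + A))
    (h0 : ∀ i j, 0 ≤ (diagonal z + A)⁻¹ i j) (h0' : ∀ i j, 0 ≤ (diagonal z' + A)⁻¹ i j)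
    (hzz' : z ≤ z') (i j : ι) : (diagonal z' + A)⁻¹ i j ≤ (diagonal z + A)⁻¹ i j := by
  have hdiff := inv_sub_inv (iff_of_true hu hu')
  rw [add_sub_add_right_eq_sub, diagonal_sub] at hdiff
  rw [← sub_nonneg, ← sub_apply, hdiff, mul_apply]
  refine Finset.sum_nonneg fun k _ => mul_nonneg ?_ (h0' k j)
  rw [mul_diagonal]
  exact mul_nonneg (h0 i k) (sub_nonneg.2 (hzz' k))

variable {C : Matrix ι ι ℝ}

lemma IsIrreducible.add_one (hC : C.IsIrreducible) : (C + 1).IsIrreducible := by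
  have h1 : ∀ i j, 0 ≤ (1 : Matrix ι ι ℝ) i j := fun i j => by
    rw [one_apply]; split_ifs <;> norm_num
  exact hC.of_pos_imp_pos (fun i j => add_nonneg (hC.nonneg i j) (h1 i j))
    fun i j h => add_pos_of_pos_of_nonneg h (h1 i j)

variable {σ : ℝ} {w : ι → ℝ}

theorem IsIrreducible.hasSum_inv_diagonal_add_smul_one_sub (hC : C.IsIrreducible) (hσ : 0 ≤ σ)
    (hw : ∀ i, 0 < w i) (hCw : C *ᵥ w ≤ σ • w) {z : ι → ℝ} (hz : 0 < z) :
    IsUnit (diagonal z + (σ • 1 - C)) ∧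
      HasSum (neumannTerm (C + 1) (σ + 1) z) (diagonal z + (σ • 1 - C))⁻¹ := by
  have hshift : diagonal z + (σ • 1 - C) = diagonal z + (σ + 1) • 1 - (C + 1) := by
    rw [add_smul, one_smul]
    abel
  have hC1w : (C + 1) *ᵥ w ≤ (σ + 1) • w := by
    rw [add_mulVec, one_mulVec, add_smul, one_smul]
    exact add_le_add hCw le_rfl
  rw [hshift]
  exact hC.add_one.hasSum_neumannTerm hw (by linarith) hC1w hz

theorem IsIrreducible.hasSum_inv_diagonal_add_smul_one_sub_apply (hC : C.IsIrreducible)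
    (hσ : 0 ≤ σ) (hw : ∀ i, 0 < w i) (hCw : C *ᵥ w ≤ σ • w) {z : ι → ℝ} (hz : 0 < z)
    (i j : ι) :
    HasSum (fun n => neumannTerm (C + 1) (σ + 1) z n i j) ((diagonal z + (σ • 1 - C))⁻¹ i j) :=
  Pi.hasSum.mp (Pi.hasSum.mp (hC.hasSum_inv_diagonal_add_smul_one_sub hσ hw hCw hz).2 i) j

theorem IsIrreducible.inv_diagonal_add_smul_one_sub_nonneg (hC : C.IsIrreducible) (hσ : 0 ≤ σ)
    (hw : ∀ i, 0 < w i) (hCw : C *ᵥ w ≤ σ • w) {z : ι → ℝ} (hz : 0 < z) (i j : ι) :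
    0 ≤ (diagonal z + (σ • 1 - C))⁻¹ i j :=
  (hC.hasSum_inv_diagonal_add_smul_one_sub_apply hσ hw hCw hz i j).nonneg fun n =>
    (logConvexOn_neumannTerm_apply hC.add_one.nonneg (by linarith) n i j).nonneg z hz.le

theorem IsIrreducible.convexOn_inv_diagonal_add_smul_one_sub_apply (hC : C.IsIrreducible)
    (hσ : 0 ≤ σ) (hw : ∀ i, 0 < w i) (hCw : C *ᵥ w ≤ σ • w) (i j : ι) :
    ConvexOn ℝ (Set.Ioi 0) fun z : ι → ℝ => (diagonal z + (σ • 1 - C))⁻¹ i j := by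
  have hsum {z : ι → ℝ} (hz : 0 < z) :=
    hC.hasSum_inv_diagonal_add_smul_one_sub_apply hσ hw hCw hz i j
  refine (convexOn_tsum (convex_Ioi 0) (fun n => ?_) fun z hz => (hsum hz).summable).congr
    fun z hz => (hsum hz).tsum_eq
  exact (logConvexOn_neumannTerm_apply hC.add_one.nonneg (by linarith) n i j).convexOn.subset
    Set.Ioi_subset_Ici_self (convex_Ioi 0)

theorem IsIrreducible.antitoneOn_inv_diagonal_add_smul_one_sub_apply (hC : C.IsIrreducible)
    (hσ : 0 ≤ σ) (hw : ∀ i, 0 < w i) (hCw : C *ᵥ w ≤ σ • w) (i j : ι) :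
    AntitoneOn (fun z : ι → ℝ => (diagonal z + (σ • 1 - C))⁻¹ i j) (Set.Ioi 0) :=
  fun _ hz _ hz' hzz' => inv_diagonal_add_apply_le_of_le
    (hC.hasSum_inv_diagonal_add_smul_one_sub hσ hw hCw hz).1
    (hC.hasSum_inv_diagonal_add_smul_one_sub hσ hw hCw hz').1
    (hC.inv_diagonal_add_smul_one_sub_nonneg hσ hw hCw hz)
    (hC.inv_diagonal_add_smul_one_sub_nonneg hσ hw hCw hz') hzz' i j

end Matrix

section SpectralRadius

lemma summable_norm_pow_div_of_spectralRadius_lt {A : Type*} [NormedRing A] [NormedAlgebra ℂ A]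
    [CompleteSpace A] {a : A} {t : ℝ} (h : spectralRadius ℂ a < ENNReal.ofReal t) :
    Summable fun n => ‖a ^ n‖ / t ^ n := by
  obtain ⟨r, hr0, hρr, hrt⟩ := ENNReal.lt_iff_exists_real_btwn.mp h
  have hrt' : r < t := (ENNReal.ofReal_lt_ofReal_iff'.mp hrt).1
  have ht : 0 < t := hr0.trans_lt hrt'
  refine Summable.of_norm_bounded_eventually_nat
    (summable_geometric_of_lt_one (div_nonneg hr0 ht.le) ((div_lt_one ht).2 hrt')) ?_
  filter_upwards [(spectrum.pow_norm_pow_one_div_tendsto_nhds_spectralRadius a).eventually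
    (gt_mem_nhds hρr), eventually_ne_atTop 0] with n hn hn0
  have hroot : ‖a ^ n‖ ^ (1 / n : ℝ) < r := (ENNReal.ofReal_lt_ofReal_iff'.mp hn).1
  have hpow : ‖a ^ n‖ ≤ r ^ n := by
    rw [← Real.rpow_inv_natCast_pow (norm_nonneg (a ^ n)) hn0, ← one_div]
    exact pow_le_pow_left₀ (by positivity) hroot.le n
  rw [Real.norm_of_nonneg (by positivity), div_pow]
  exact div_le_div_of_nonneg_right hpow (by positivity)

variable {N : ℕ}

lemma specRad_nonneg (C : Matrix (Fin N) (Fin N) ℝ) : 0 ≤ specRad C :=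
  Real.sSup_nonneg (by rintro _ ⟨μ, -, rfl⟩; exact norm_nonneg μ)

lemma spectralRadius_map_ofReal_le_specRad (C : Matrix (Fin N) (Fin N) ℝ) :
    spectralRadius ℂ (C.map Complex.ofReal) ≤ ENNReal.ofReal (specRad C) := by
  refine iSup₂_le fun μ hμ => ?_
  rw [← ENNReal.ofReal_coe_nnreal, coe_nnnorm]
  exact ENNReal.ofReal_le_ofReal
    (le_csSup ((Matrix.finite_spectrum _).image _).bddAbove ⟨μ, hμ, rfl⟩)

section LinftyOpNorm

attribute [local instance] Matrix.linftyOpNormedAddCommGroup Matrix.linftyOpNormedRing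
  Matrix.linftyOpNormedAlgebra

lemma Matrix.norm_apply_le_linfty_opNorm {m n α : Type*} [Fintype m] [Fintype n]
    [NormedAddCommGroup α] (A : Matrix m n α) (i : m) (j : n) : ‖A i j‖ ≤ ‖A‖ := by
  rw [Matrix.linfty_opNorm_def, ← coe_nnnorm, NNReal.coe_le_coe]
  exact (Finset.single_le_sum (f := fun j => ‖A i j‖₊) (fun _ _ => zero_le)
    (Finset.mem_univ j)).trans (Finset.le_sup (f := fun i => ∑ j, ‖A i j‖₊) (Finset.mem_univ i))

lemma summable_pow_smul_of_specRad_lt {C : Matrix (Fin N) (Fin N) ℝ} {t : ℝ}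
    (ht : specRad C < t) : Summable fun n => (t⁻¹ • C) ^ n := by
  have ht0 : 0 < t := (specRad_nonneg C).trans_lt ht
  have hs := summable_norm_pow_div_of_spectralRadius_lt
    ((spectralRadius_map_ofReal_le_specRad C).trans_lt ((ENNReal.ofReal_lt_ofReal_iff ht0).2 ht))
  refine Pi.summable.mpr fun i => Pi.summable.mpr fun j => hs.of_norm_bounded fun n => ?_
  have hentry : ((C.map Complex.ofReal) ^ n) i j = ((C ^ n) i j : ℂ) :=
    (congrFun (congrFun (Matrix.map_pow C Complex.ofRealHom n) i) j).symm
  calc ‖((t⁻¹ • C) ^ n) i j‖ = ‖((C.map Complex.ofReal) ^ n) i j‖ / t ^ n := by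
        rw [smul_pow, Matrix.smul_apply, hentry, Complex.norm_real, norm_smul, norm_pow, norm_inv,
          Real.norm_of_nonneg ht0.le, inv_pow, inv_mul_eq_div]
    _ ≤ ‖(C.map Complex.ofReal) ^ n‖ / t ^ n :=
        div_le_div_of_nonneg_right (Matrix.norm_apply_le_linfty_opNorm _ i j) (by positivity)

end LinftyOpNorm

lemma exists_one_le_mulVec_le_smul_of_specRad_lt {C : Matrix (Fin N) (Fin N) ℝ}
    (hC : ∀ i j, 0 ≤ C i j) {t : ℝ} (ht : specRad C < t) :
    ∃ v : Fin N → ℝ, 1 ≤ v ∧ C *ᵥ v ≤ t • v := by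
  have ht0 : 0 < t := (specRad_nonneg C).trans_lt ht
  have hS := summable_pow_smul_of_specRad_lt ht
  have hS0 : ∀ i j, 0 ≤ (∑' n, (t⁻¹ • C) ^ n) i j := fun i j =>
    (Pi.hasSum.mp (Pi.hasSum.mp hS.hasSum i) j).nonneg fun n => pow_apply_nonneg
      (fun a b => mul_nonneg (inv_nonneg.2 ht0.le) (hC a b)) n i j
  set v := (∑' n, (t⁻¹ • C) ^ n) *ᵥ 1
  have hv0 : 0 ≤ v := by simpa using mulVec_mono_of_nonneg hS0 (zero_le_one (α := Fin N → ℝ))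
  have hCv0 : 0 ≤ t⁻¹ • (C *ᵥ v) := smul_nonneg (inv_nonneg.2 ht0.le)
    (by simpa using mulVec_mono_of_nonneg hC hv0)
  have hv : v = 1 + t⁻¹ • (C *ᵥ v) := by
    have := congrArg (· *ᵥ (1 : Fin N → ℝ)) hS.one_sub_mul_tsum_pow
    simp only [sub_mul, one_mul, ← mulVec_mulVec, sub_mulVec, one_mulVec, smul_mulVec] at this
    rw [← this]; abel
  refine ⟨v, hv ▸ le_add_of_nonneg_right hCv0, fun i => ?_⟩
  have hvi : v i = 1 + t⁻¹ * (C *ᵥ v) i := congrFun hv i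
  calc (C *ᵥ v) i = t * (v i - 1) := by rw [hvi]; field_simp; ring
    _ ≤ t * v i := by linarith

theorem exists_pos_mulVec_le_specRad_smul {C : Matrix (Fin N) (Fin N) ℝ}
    (hC : C.IsIrreducible) : ∃ w : Fin N → ℝ, (∀ i, 0 < w i) ∧ C *ᵥ w ≤ specRad C • w := by
  rcases N.eq_zero_or_pos with rfl | hN
  · exact ⟨0, finZeroElim, fun i => i.elim0⟩
  have : NeZero N := ⟨hN.ne'⟩
  set t : ℕ → ℝ := fun m => specRad C + 1 / (m + 1)
  set K : ℕ → Set (Fin N → ℝ) := fun m => stdSimplex ℝ (Fin N) ∩ {u | C *ᵥ u ≤ t m • u}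
  have hclosed : ∀ m, IsClosed {u | C *ᵥ u ≤ t m • u} := fun m =>
    isClosed_le (Continuous.matrix_mulVec continuous_const continuous_id)
      (continuous_const_smul _)
  have hKclosed : ∀ m, IsClosed (K m) := fun m =>
    (isClosed_stdSimplex ℝ (Fin N)).inter (hclosed m)
  have htanti : ∀ m, t (m + 1) ≤ t m := fun m => by
    simp only [t]
    gcongr
    linarith
  have hKanti : ∀ m, K (m + 1) ⊆ K m := fun m u ⟨hu, hCu⟩ =>
    ⟨hu, show C *ᵥ u ≤ t m • u from
      (hCu : C *ᵥ u ≤ t (m + 1) • u).trans (smul_le_smul_of_nonneg_right (htanti m) hu.1)⟩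
  have hKne : ∀ m, (K m).Nonempty := fun m => by
    obtain ⟨v, hv1, hCv⟩ := exists_one_le_mulVec_le_smul_of_specRad_lt hC.nonneg
      (lt_add_of_pos_right (specRad C) (by positivity : (0 : ℝ) < 1 / (m + 1)))
    exact exists_mem_stdSimplex_mulVec_le_smul (fun i => one_pos.trans_le (hv1 i)) hCv
  obtain ⟨u, hu⟩ := IsCompact.nonempty_iInter_of_sequence_nonempty_isCompact_isClosed K hKanti
    hKne ((isCompact_stdSimplex ℝ (Fin N)).inter_right (hclosed 0)) hKclosed
  rw [Set.mem_iInter] at hu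
  have ht : Tendsto t atTop (𝓝 (specRad C)) := by
    simpa only [add_zero] using tendsto_one_div_add_atTop_nhds_zero_nat.const_add (specRad C)
  have hCu : C *ᵥ u ≤ specRad C • u := fun i =>
    le_of_tendsto_of_tendsto' tendsto_const_nhds (ht.mul_const (u i)) fun m => (hu m).2 i
  have hu0 : 0 < u := lt_of_le_of_ne (hu 0).1.1 fun h => by simpa [← h] using (hu 0).1.2
  exact ⟨u, hC.pos_of_mulVec_le_smul hu0 (specRad_nonneg C) hCu, hCu⟩

end SpectralRadius

theorem statement5_general {N : ℕ}
    (C : Matrix (Fin N) (Fin N) ℝ) (hCnn : ∀ i j, 0 ≤ C i j) (hCirr : MatIrred C)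
    (σ : ℝ) (hσ : specRad C ≤ σ)
    (A : Matrix (Fin N) (Fin N) ℝ) (hA : A = σ • (1 : Matrix (Fin N) (Fin N) ℝ) - C) :
    (∀ z : Fin N → ℝ, (∀ i, 0 ≤ z i) → z ≠ 0 →
      IsUnit (Matrix.diagonal z + A) ∧
      ∀ i j, 0 ≤ (Matrix.diagonal z + A)⁻¹ i j) ∧
    (∀ i j : Fin N, ∀ z z' : Fin N → ℝ,
      (∀ k, 0 ≤ z k) → z ≠ 0 → (∀ k, 0 ≤ z' k) → z' ≠ 0 →
      (∀ θ : ℝ, 0 ≤ θ → θ ≤ 1 →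
        (Matrix.diagonal (fun k => θ * z k + (1 - θ) * z' k) + A)⁻¹ i j ≤
          θ * (Matrix.diagonal z + A)⁻¹ i j + (1 - θ) * (Matrix.diagonal z' + A)⁻¹ i j) ∧
      (z ≤ z' → (Matrix.diagonal z' + A)⁻¹ i j ≤ (Matrix.diagonal z + A)⁻¹ i j)) := by
  subst hA
  have hC : C.IsIrreducible := (isIrreducible_iff_exists_pow_pos hCnn).mpr hCirr
  have hσ0 : 0 ≤ σ := (specRad_nonneg C).trans hσ
  obtain ⟨w, hw, hCw⟩ := exists_pos_mulVec_le_specRad_smul hC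
  have hCwσ : C *ᵥ w ≤ σ • w := hCw.trans (smul_le_smul_of_nonneg_right hσ fun i => (hw i).le)
  have hpos : ∀ z : Fin N → ℝ, (∀ i, 0 ≤ z i) → z ≠ 0 → 0 < z := fun z hz hz0 =>
    lt_of_le_of_ne hz (Ne.symm hz0)
  refine ⟨fun z hz hz0 => ⟨(hC.hasSum_inv_diagonal_add_smul_one_sub hσ0 hw hCwσ
      (hpos z hz hz0)).1, hC.inv_diagonal_add_smul_one_sub_nonneg hσ0 hw hCwσ (hpos z hz hz0)⟩,
    fun i j z z' hz hz0 hz' hz'0 => ⟨fun θ hθ0 hθ1 => ?_, fun hzz' =>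
      hC.antitoneOn_inv_diagonal_add_smul_one_sub_apply hσ0 hw hCwσ i j (hpos z hz hz0)
        (hpos z' hz' hz'0) hzz'⟩⟩
  exact (hC.convexOn_inv_diagonal_add_smul_one_sub_apply hσ0 hw hCwσ i j).2 (hpos z hz hz0)
    (hpos z' hz' hz'0) hθ0 (sub_nonneg.2 hθ1) (add_sub_cancel θ 1)

theorem statement5 {N : ℕ} (hN : 2 ≤ N)
    (C : Matrix (Fin N) (Fin N) ℝ) (hCnn : ∀ i j, 0 ≤ C i j) (hCirr : MatIrred C)
    (σ : ℝ) (hσ : specRad C ≤ σ)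
    (A : Matrix (Fin N) (Fin N) ℝ) (hA : A = σ • (1 : Matrix (Fin N) (Fin N) ℝ) - C) :
    (∀ z : Fin N → ℝ, (∀ i, 0 ≤ z i) → z ≠ 0 →
      IsUnit (Matrix.diagonal z + A) ∧
      ∀ i j, 0 ≤ (Matrix.diagonal z + A)⁻¹ i j) ∧
    (∀ i j : Fin N, ∀ z z' : Fin N → ℝ,
      (∀ k, 0 ≤ z k) → z ≠ 0 → (∀ k, 0 ≤ z' k) → z' ≠ 0 →
      (∀ θ : ℝ, 0 ≤ θ → θ ≤ 1 →
        (Matrix.diagonal (fun k => θ * z k + (1 - θ) * z' k) + A)⁻¹ i j ≤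
          θ * (Matrix.diagonal z + A)⁻¹ i j + (1 - θ) * (Matrix.diagonal z' + A)⁻¹ i j) ∧
      (z ≤ z' → (Matrix.diagonal z' + A)⁻¹ i j ≤ (Matrix.diagonal z + A)⁻¹ i j)) :=
  statement5_general C hCnn hCirr σ hσ A hA
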